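/- Let M₄(ℂ[X,Y])₀ be the algebra of 4×4 matrices over ℂ[X,Y] whose 2×2 diagonal blocks have entries of even total degree and whose off-diagonal 2×2 blocks have entries of odd total degree. For a pair (z,z') of complex numbers, the evaluation map ev_{(z,z')} : M₄(ℂ[X,Y])₀ → M₄(ℂ), P(X,Y) ↦ P(z,z'), is surjective if and only if (z,z') ≠ (0,0); when (z,z') = (0,0), the image of ev_{(0,0)} equals the block-diagonal subalgebra M₂(ℂ) ⊕ M₂(ℂ) ⊆ M₄(ℂ). -/

import Mathlib

open MvPolynomial

/-! At a point `(z, z') ≠ (0, 0)` some linear form `ℓ = X/z` or `ℓ = Y/z'` takes the value `1`,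
so `M` lifts to the matrix with constant diagonal blocks `C (M i j)` and off-diagonal blocks
`C (M i j) * ℓ`. At the origin every odd polynomial vanishes, so the off-diagonal blocks of
`P(0, 0)` are zero, while a block-diagonal `M` lifts to its constant matrix. -/

/-- A polynomial in `ℂ[X,Y]` is even when all its monomials `XᵐYⁿ` have `m + n` even. -/
def IsEvenPoly (p : MvPolynomial (Fin 2) ℂ) : Prop :=
  ∀ m : Fin 2 →₀ ℕ, Odd (m 0 + m 1) → MvPolynomial.coeff m p = 0

/-- A polynomial in `ℂ[X,Y]` is odd when all its monomials `XᵐYⁿ` have `m + n` odd. -/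
def IsOddPoly (p : MvPolynomial (Fin 2) ℂ) : Prop :=
  ∀ m : Fin 2 →₀ ℕ, Even (m 0 + m 1) → MvPolynomial.coeff m p = 0

/-- Membership in `M₄(ℂ[X,Y])₀`: the `2×2` diagonal blocks have entries of even
total degree and the `2×2` off-diagonal blocks have entries of odd total degree. -/
def MemM4Even (P : Matrix (Fin 4) (Fin 4) (MvPolynomial (Fin 2) ℂ)) : Prop :=
  ∀ i j : Fin 4,
    (((i : ℕ) < 2 ↔ (j : ℕ) < 2) → IsEvenPoly (P i j)) ∧
    (¬((i : ℕ) < 2 ↔ (j : ℕ) < 2) → IsOddPoly (P i j))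

lemma isEvenPoly_C (c : ℂ) : IsEvenPoly (C c) := by
  intro m hm
  rw [coeff_C, if_neg]
  rintro rfl
  simp at hm

lemma isOddPoly_zero : IsOddPoly 0 := fun m _ => coeff_zero m

lemma isOddPoly_X (i : Fin 2) : IsOddPoly (X i) := by
  intro m hm
  rw [coeff_X, if_neg]
  rintro rfl
  fin_cases i <;> simp at hm

lemma IsOddPoly.C_mul {p : MvPolynomial (Fin 2) ℂ} (hp : IsOddPoly p) (c : ℂ) :
    IsOddPoly (C c * p) := by
  intro m hm
  rw [coeff_C_mul, hp m hm, mul_zero]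

lemma IsOddPoly.eval_zero {p : MvPolynomial (Fin 2) ℂ} (hp : IsOddPoly p) :
    eval ![0, 0] p = 0 := by
  have hzero : ![(0 : ℂ), 0] = 0 := by
    ext i; fin_cases i <;> rfl
  rw [hzero, MvPolynomial.eval_zero]
  exact hp 0 (by simp)

lemma exists_isOddPoly_eval_eq_one {z z' : ℂ} (h : (z, z') ≠ (0, 0)) :
    ∃ p, IsOddPoly p ∧ eval ![z, z'] p = 1 := by
  by_cases hz : z = 0
  · have hz' : z' ≠ 0 := fun hz' => h (by rw [hz, hz'])
    exact ⟨C z'⁻¹ * X 1, (isOddPoly_X 1).C_mul _, by simp [hz']⟩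
  · exact ⟨C z⁻¹ * X 0, (isOddPoly_X 0).C_mul _, by simp [hz]⟩

lemma map_eval_zero_apply_eq_zero {P : Matrix (Fin 4) (Fin 4) (MvPolynomial (Fin 2) ℂ)}
    (hP : MemM4Even P) {i j : Fin 4} (hij : ¬((i : ℕ) < 2 ↔ (j : ℕ) < 2)) :
    P.map (eval ![0, 0]) i j = 0 :=
  ((hP i j).2 hij).eval_zero

lemma memM4Even_map_C {M : Matrix (Fin 4) (Fin 4) ℂ}
    (hM : ∀ i j : Fin 4, ¬((i : ℕ) < 2 ↔ (j : ℕ) < 2) → M i j = 0) :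
    MemM4Even (M.map C) := by
  refine fun i j => ⟨fun _ => isEvenPoly_C _, fun hij => ?_⟩
  rw [Matrix.map_apply, hM i j hij, C_0]
  exact isOddPoly_zero

lemma exists_memM4Even_map_eval_eq {z z' : ℂ} (h : (z, z') ≠ (0, 0))
    (M : Matrix (Fin 4) (Fin 4) ℂ) : ∃ P, MemM4Even P ∧ P.map (eval ![z, z']) = M := by
  obtain ⟨ℓ, hℓ, hℓ_eval⟩ := exists_isOddPoly_eval_eq_one h
  refine ⟨Matrix.of fun i j =>
    if (i : ℕ) < 2 ↔ (j : ℕ) < 2 then C (M i j) else C (M i j) * ℓ, fun i j => ?_, ?_⟩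
  · constructor <;> intro hij <;> simp only [Matrix.of_apply, hij, if_true, if_false]
    exacts [isEvenPoly_C _, hℓ.C_mul _]
  · ext i j
    simp only [Matrix.map_apply, Matrix.of_apply]
    split_ifs <;> simp [hℓ_eval]

/-- For a pair `(z,z')` of complex numbers, the evaluation map
`ev_{(z,z')} : M₄(ℂ[X,Y])₀ → M₄(ℂ)` is surjective if and only if `(z,z') ≠ (0,0)`;
when `(z,z') = (0,0)`, the image of `ev_{(0,0)}` equals the block-diagonal subalgebra
`M₂(ℂ) ⊕ M₂(ℂ) ⊆ M₄(ℂ)`. -/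
theorem evaluation_surjective_iff :
    (∀ z z' : ℂ, ((z, z') ≠ ((0 : ℂ), (0 : ℂ)) ↔
        ∀ M : Matrix (Fin 4) (Fin 4) ℂ, ∃ P, MemM4Even P ∧
          P.map (MvPolynomial.eval ![z, z']) = M)) ∧
    ({M : Matrix (Fin 4) (Fin 4) ℂ | ∃ P, MemM4Even P ∧
          P.map (MvPolynomial.eval ![(0 : ℂ), (0 : ℂ)]) = M}
        = {M | ∀ i j : Fin 4, ¬((i : ℕ) < 2 ↔ (j : ℕ) < 2) → M i j = 0}) := by
  refine ⟨fun z z' => ⟨exists_memM4Even_map_eval_eq, ?_⟩, ?_⟩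
  · rintro hsurj hzero
    obtain ⟨hz, hz'⟩ := Prod.mk.inj hzero
    subst hz hz'
    obtain ⟨P, hP, hPM⟩ := hsurj (Matrix.of fun _ _ => 1)
    have h02 := map_eval_zero_apply_eq_zero hP (i := 0) (j := 2) (by decide)
    rw [hPM] at h02
    exact one_ne_zero h02
  · ext M
    constructor
    · rintro ⟨P, hP, rfl⟩ i j hij
      exact map_eval_zero_apply_eq_zero hP hij
    · intro hM
      exact ⟨M.map C, memM4Even_map_C hM, by ext; simp⟩
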